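/- Let C : I_a × I_b × I_f → ℝ factor as C = (C_a ⊗ C_b) G C_f in the sense of the previous statement, and suppose the sketched matrices A_a = S_aᵀC_a, A_b = S_bᵀC_b, A_f = C_f S_f each have full column rank (resp. full row rank for A_f). Then the core G is uniquely determined by the sketched system: G = (A_a)⁺ ⊗-contracted with B and (A_b)⁺, (A_f)⁺, i.e., G(α,β,θ) = Σ_{μ,ν,ζ} A_a⁺(α,μ) A_b⁺(β,ν) A_f⁺(θ,ζ) B(μ,ν,ζ), where M⁺ denotes the Moore–Penrose pseudoinverse. -/
import Mathlib



open Matrix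

open Finset in
private lemma bubble3' {A1 A2 B : Type*} [Fintype A1] [Fintype A2] [Fintype B] (f : A1 → A2 → B → ℝ) :
    ∑ a1, ∑ a2, ∑ b, f a1 a2 b = ∑ b, ∑ a1, ∑ a2, f a1 a2 b := by
  calc ∑ a1, ∑ a2, ∑ b, f a1 a2 b = ∑ a1, ∑ b, ∑ a2, f a1 a2 b :=
        Finset.sum_congr rfl fun a1 _ => Finset.sum_comm
    _ = _ := Finset.sum_comm

open Finset in
private lemma bubble4' {A1 A2 A3 B : Type*} [Fintype A1] [Fintype A2] [Fintype A3] [Fintype B]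
    (f : A1 → A2 → A3 → B → ℝ) :
    ∑ a1, ∑ a2, ∑ a3, ∑ b, f a1 a2 a3 b = ∑ b, ∑ a1, ∑ a2, ∑ a3, f a1 a2 a3 b := by
  calc ∑ a1, ∑ a2, ∑ a3, ∑ b, f a1 a2 a3 b = ∑ a1, ∑ b, ∑ a2, ∑ a3, f a1 a2 a3 b :=
        Finset.sum_congr rfl fun a1 _ => bubble3' _
    _ = _ := Finset.sum_comm

open Finset in
private lemma sum_swap33' {A1 A2 A3 B1 B2 B3 : Type*} [Fintype A1] [Fintype A2] [Fintype A3]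
    [Fintype B1] [Fintype B2] [Fintype B3] (f : A1 → A2 → A3 → B1 → B2 → B3 → ℝ) :
    ∑ a1, ∑ a2, ∑ a3, ∑ b1, ∑ b2, ∑ b3, f a1 a2 a3 b1 b2 b3
      = ∑ b1, ∑ b2, ∑ b3, ∑ a1, ∑ a2, ∑ a3, f a1 a2 a3 b1 b2 b3 := by
  calc ∑ a1, ∑ a2, ∑ a3, ∑ b1, ∑ b2, ∑ b3, f a1 a2 a3 b1 b2 b3
      = ∑ b1, ∑ a1, ∑ a2, ∑ a3, ∑ b2, ∑ b3, f a1 a2 a3 b1 b2 b3 := bubble4' _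
    _ = ∑ b1, ∑ b2, ∑ a1, ∑ a2, ∑ a3, ∑ b3, f a1 a2 a3 b1 b2 b3 :=
        Finset.sum_congr rfl fun b1 _ => bubble4' _
    _ = _ := Finset.sum_congr rfl fun b1 _ => Finset.sum_congr rfl fun b2 _ => bubble4' _

private lemma isUnit_of_rank_eq' {n : ℕ} (M : Matrix (Fin n) (Fin n) ℝ) (h : M.rank = n) :
    IsUnit M := by
  rw [← Matrix.mulVec_surjective_iff_isUnit]
  have : LinearMap.range M.mulVecLin = ⊤ := by
    apply Submodule.eq_top_of_finrank_eq
    rw [← Matrix.rank, h, Module.finrank_pi]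
    simp
  intro v
  obtain ⟨w, hw⟩ := LinearMap.range_eq_top.mp this v
  exact ⟨w, hw⟩

/-- Left Moore–Penrose pseudoinverse of a full-column-rank matrix. -/
noncomputable def pinvCol {m n : Type*} [Fintype m] [Fintype n] [DecidableEq n]
    (A : Matrix m n ℝ) : Matrix n m ℝ := (Aᵀ * A)⁻¹ * Aᵀ

/-- Right Moore–Penrose pseudoinverse of a full-row-rank matrix. -/
noncomputable def pinvRow {m n : Type*} [Fintype m] [Fintype n] [DecidableEq m]
    (A : Matrix m n ℝ) : Matrix n m ℝ := Aᵀ * (A * Aᵀ)⁻¹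

/-- If the sketched matrices have full column (resp. row) rank, the tensor core `G` is
uniquely recovered from the sketched system by contraction with pseudoinverses. -/
theorem core_recovery_by_pseudoinverse
    {Ia Ib If : Type*} [Fintype Ia] [Fintype Ib] [Fintype If]
    {ra rb rf ta tb tf : ℕ}
    (C : Ia → Ib → If → ℝ)
    (Ca : Ia → Fin ra → ℝ) (Cb : Ib → Fin rb → ℝ) (Cf : Fin rf → If → ℝ)
    (G : Fin ra → Fin rb → Fin rf → ℝ)
    (hfac : ∀ ia ib ifi, C ia ib ifi =
      ∑ α, ∑ β, ∑ θ, Ca ia α * Cb ib β * G α β θ * Cf θ ifi)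
    (Sa : Ia → Fin ta → ℝ) (Sb : Ib → Fin tb → ℝ) (Sf : If → Fin tf → ℝ)
    (Aa : Matrix (Fin ta) (Fin ra) ℝ) (hAa : ∀ μ α, Aa μ α = ∑ ia, Sa ia μ * Ca ia α)
    (Ab : Matrix (Fin tb) (Fin rb) ℝ) (hAb : ∀ ν β, Ab ν β = ∑ ib, Sb ib ν * Cb ib β)
    (Af : Matrix (Fin rf) (Fin tf) ℝ) (hAf : ∀ θ ζ, Af θ ζ = ∑ ifi, Cf θ ifi * Sf ifi ζ)
    (hrkAa : Aa.rank = ra) (hrkAb : Ab.rank = rb) (hrkAf : Af.rank = rf)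
    (B : Fin ta → Fin tb → Fin tf → ℝ)
    (hB : ∀ μ ν ζ, B μ ν ζ =
      ∑ ia, ∑ ib, ∑ ifi, C ia ib ifi * Sa ia μ * Sb ib ν * Sf ifi ζ) :
    ∀ α β θ, G α β θ =
      ∑ μ, ∑ ν, ∑ ζ, pinvCol Aa α μ * pinvCol Ab β ν * pinvRow Af ζ θ * B μ ν ζ := by
  have hUa : IsUnit ((Aaᵀ * Aa).det) :=
    (Matrix.isUnit_iff_isUnit_det _).mp
      (isUnit_of_rank_eq' _ (by rw [Matrix.rank_transpose_mul_self, hrkAa]))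
  have hUb : IsUnit ((Abᵀ * Ab).det) :=
    (Matrix.isUnit_iff_isUnit_det _).mp
      (isUnit_of_rank_eq' _ (by rw [Matrix.rank_transpose_mul_self, hrkAb]))
  have hUf : IsUnit ((Af * Afᵀ).det) :=
    (Matrix.isUnit_iff_isUnit_det _).mp
      (isUnit_of_rank_eq' _ (by rw [Matrix.rank_self_mul_transpose, hrkAf]))
  have h1 : pinvCol Aa * Aa = 1 := by
    rw [pinvCol, Matrix.mul_assoc, Matrix.nonsing_inv_mul _ hUa]
  have h2 : pinvCol Ab * Ab = 1 := by
    rw [pinvCol, Matrix.mul_assoc, Matrix.nonsing_inv_mul _ hUb]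
  have h3 : Af * pinvRow Af = 1 := by
    rw [pinvRow, ← Matrix.mul_assoc, Matrix.mul_nonsing_inv _ hUf]
  have haa : ∀ α α', ∑ μ, pinvCol Aa α μ * Aa μ α' = if α = α' then 1 else 0 := by
    intro α α'
    have := congrFun (congrFun h1 α) α'
    rwa [Matrix.mul_apply, Matrix.one_apply] at this
  have hbb : ∀ β β', ∑ ν, pinvCol Ab β ν * Ab ν β' = if β = β' then 1 else 0 := by
    intro β β'
    have := congrFun (congrFun h2 β) β'
    rwa [Matrix.mul_apply, Matrix.one_apply] at this
  have hff : ∀ θ θ', ∑ ζ, Af θ' ζ * pinvRow Af ζ θ = if θ' = θ then 1 else 0 := by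
    intro θ θ'
    have := congrFun (congrFun h3 θ') θ
    rwa [Matrix.mul_apply, Matrix.one_apply] at this
  have hB' : ∀ μ ν ζ, B μ ν ζ = ∑ α, ∑ β, ∑ θ, Aa μ α * Ab ν β * G α β θ * Af θ ζ := by
    intro μ ν ζ
    rw [hB]
    simp only [hfac, hAa, hAb, hAf, Finset.sum_mul, Finset.mul_sum]
    rw [sum_swap33']
    refine Finset.sum_congr rfl fun α _ => Finset.sum_congr rfl fun β _ =>
      Finset.sum_congr rfl fun θ _ => ?_
    rw [bubble3']
    refine Finset.sum_congr rfl fun ifi _ => Finset.sum_comm.trans ?_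
    exact Finset.sum_congr rfl fun ib _ => Finset.sum_congr rfl fun ia _ => by ring
  intro α β θ
  have key : ∀ α' β' θ', (∑ μ, ∑ ν, ∑ ζ,
      pinvCol Aa α μ * pinvCol Ab β ν * pinvRow Af ζ θ *
        (Aa μ α' * Ab ν β' * G α' β' θ' * Af θ' ζ))
      = (if α = α' then 1 else 0) * ((if β = β' then 1 else 0) *
        ((if θ' = θ then 1 else 0) * G α' β' θ')) := by
    intro α' β' θ'
    rw [← haa α α', ← hbb β β', ← hff θ θ']
    simp only [Finset.sum_mul, Finset.mul_sum]
    rw [bubble3']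
    exact Finset.sum_congr rfl fun ζ _ => Finset.sum_comm.trans
      (Finset.sum_congr rfl fun ν _ => Finset.sum_congr rfl fun μ _ => by ring)
  simp only [hB', Finset.mul_sum]
  rw [sum_swap33']
  simp only [key]
  simp [Finset.sum_ite_eq, ite_mul, one_mul, zero_mul]
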